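/- For every partition λ of n, the composite map σ∘π applied to λ equals the conjugate partition λ* of λ, where π(λ)_i = i·λ_i + Σ_{j>i} λ_j and σ(φ) is the partition in which i has frequency (φ_i − φ_{i+1})/i. -/

import Mathlib

/-- A partition represented as a weakly decreasing list of positive integers. -/
def IsPartition (l : List ℕ) : Prop :=
  l.Pairwise (· ≥ ·) ∧ ∀ x ∈ l, 0 < x

/-- Sequentially congruent: `λ_i ≡ λ_{i+1} (mod i)` for `1 ≤ i ≤ r-1` and `λ_r ≡ 0 (mod r)`
(0-indexed, with the convention `λ_{r+1} = 0`). -/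
def SeqCongruent (l : List ℕ) : Prop :=
  ∀ j < l.length, l.getD j 0 ≡ l.getD (j+1) 0 [MOD j+1]

/-- The map `π`: `π(λ)_i = i·λ_i + Σ_{j=i+1}^r λ_j` (1-indexed). -/
def piMap (l : List ℕ) : List ℕ :=
  (List.range l.length).map (fun j => (j+1) * l.getD j 0 + (l.drop (j+1)).sum)

/-- The map `σ`: the partition in which `i` occurs with frequency `(φ_i - φ_{i+1})/i`. -/
def sigmaMap (l : List ℕ) : List ℕ :=
  ((List.range l.length).reverse).flatMap
    (fun j => List.replicate ((l.getD j 0 - l.getD (j+1) 0) / (j+1)) (j+1))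

/-- The conjugate partition: its `i`-th part is the number of parts of `l` that are `≥ i`. -/
def conj (l : List ℕ) : List ℕ :=
  (List.range (l.getD 0 0)).map (fun i => l.countP (fun x => decide (i + 1 ≤ x)))

/-- Frequency congruent: each part `i` occurs with frequency divisible by `i`. -/
def FreqCongruent (l : List ℕ) : Prop :=
  ∀ i, 0 < i → i ∣ l.count i


/-! The differences of `π(λ)` are `π(λ)_i - π(λ)_{i+1} = i (λ_i - λ_{i+1})`, so `σ(π(λ))`
contains the part `i` exactly `λ_i - λ_{i+1}` times. That is the number of columns of height `i`
in the Young diagram of `λ`, i.e. the multiplicity of `i` in `λ*`; removing the first row of `λ`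
shows this by induction. -/

namespace List

lemma getD_succ_le_getD_of_pairwise_ge {l : List ℕ} (hs : l.Pairwise (· ≥ ·)) (j : ℕ) :
    l.getD (j + 1) 0 ≤ l.getD j 0 := by
  by_cases h : j + 1 < l.length
  · rw [getD_eq_getElem _ _ h, getD_eq_getElem _ _ (by omega)]
    exact pairwise_iff_getElem.mp hs j (j + 1) (by omega) h (by omega)
  · rw [getD_eq_default _ _ (not_lt.mp h)]
    exact Nat.zero_le _

lemma le_getD_zero_of_pairwise_ge {l : List ℕ} (hs : l.Pairwise (· ≥ ·)) {x : ℕ}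
    (hx : x ∈ l) : x ≤ l.getD 0 0 := by
  cases l with
  | nil => simp at hx
  | cons b s =>
    rcases mem_cons.mp hx with rfl | hx
    · simp
    · exact rel_of_pairwise_cons hs hx

lemma sum_drop_eq_getD_add (l : List ℕ) (k : ℕ) :
    (l.drop k).sum = l.getD k 0 + (l.drop (k + 1)).sum := by
  by_cases h : k < l.length
  · rw [drop_eq_getElem_cons h, getD_eq_getElem _ _ h, sum_cons]
  · rw [getD_eq_default _ _ (not_lt.mp h), drop_eq_nil_of_le (not_lt.mp h),
      drop_eq_nil_of_le (by omega)]
    rfl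

end List

open List

lemma piMap_getD (l : List ℕ) (j : ℕ) :
    (piMap l).getD j 0 = (j + 1) * l.getD j 0 + (l.drop (j + 1)).sum := by
  by_cases h : j < l.length
  · simp [piMap, getD_eq_getElem?_getD, h]
  · rw [getD_eq_default _ _ (by simpa [piMap] using h), getD_eq_default _ _ (not_lt.mp h),
      drop_eq_nil_of_le (by omega)]
    rfl

lemma piMap_getD_sub_getD_succ {l : List ℕ} (hs : l.Pairwise (· ≥ ·)) (j : ℕ) :
    (piMap l).getD j 0 - (piMap l).getD (j + 1) 0 = (j + 1) * (l.getD j 0 - l.getD (j + 1) 0) := by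
  rw [piMap_getD, piMap_getD, sum_drop_eq_getD_add l (j + 1)]
  obtain ⟨d, hd⟩ := Nat.exists_eq_add_of_le (getD_succ_le_getD_of_pairwise_ge hs j)
  rw [hd, Nat.add_sub_cancel_left]
  apply Nat.sub_eq_of_eq_add
  ring

/-- The partition in which `j + 1` occurs `l_j - l_{j+1}` times (0-indexed). -/
def replicateDiffs (l : List ℕ) : List ℕ :=
  (List.range l.length).reverse.flatMap
    (fun j => List.replicate (l.getD j 0 - l.getD (j + 1) 0) (j + 1))

lemma sigmaMap_piMap {l : List ℕ} (hs : l.Pairwise (· ≥ ·)) :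
    sigmaMap (piMap l) = replicateDiffs l := by
  have hlen : (piMap l).length = l.length := by simp [piMap]
  unfold sigmaMap replicateDiffs
  rw [hlen]
  refine flatMap_congr fun j _ => ?_
  rw [piMap_getD_sub_getD_succ hs, Nat.mul_div_cancel_left _ j.succ_pos]

lemma replicateDiffs_cons (a : ℕ) (t : List ℕ) :
    replicateDiffs (a :: t) =
      (replicateDiffs t).map (· + 1) ++ replicate (a - t.getD 0 0) 1 := by
  unfold replicateDiffs
  rw [length_cons, range_succ_eq_map, reverse_cons, flatMap_append, ← map_reverse, flatMap_map,
    map_flatMap]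
  simp [map_replicate]

lemma conj_cons {a : ℕ} {t : List ℕ} (hs : (a :: t).Pairwise (· ≥ ·)) :
    conj (a :: t) = (conj t).map (· + 1) ++ replicate (a - t.getD 0 0) 1 := by
  set m := t.getD 0 0
  have hle : ∀ x ∈ t, x ≤ m := fun x => le_getD_zero_of_pairwise_ge hs.of_cons
  have hma : m ≤ a := by
    cases t with
    | nil => simp [m]
    | cons b s => exact rel_of_pairwise_cons hs mem_cons_self
  have hrange : range a = range m ++ (range (a - m)).map (m + ·) := by
    rw [← range_add, Nat.add_sub_of_le hma]
  unfold conj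
  rw [getD_cons_zero, hrange, map_append, map_map, map_map]
  congr 1
  · refine map_congr_left fun i hi => ?_
    have : i < a := by rw [mem_range] at hi; omega
    simp [this]
  · rw [eq_replicate_iff]
    simp only [length_map, length_range, mem_map, mem_range, true_and]
    rintro _ ⟨i, hi, rfl⟩
    have ht : t.countP (fun x => decide (m + i + 1 ≤ x)) = 0 :=
      countP_eq_zero.mpr fun x hx => by have := hle x hx; simp; omega
    rw [Function.comp_apply, countP_cons, ht]
    simp
    omega

lemma replicateDiffs_eq_conj {l : List ℕ} (hs : l.Pairwise (· ≥ ·)) :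
    replicateDiffs l = conj l := by
  induction l with
  | nil => rfl
  | cons a t ih => rw [replicateDiffs_cons, conj_cons hs, ih hs.of_cons]

theorem stmt8 (l : List ℕ) (hl : IsPartition l) :
    sigmaMap (piMap l) = conj l := by
  rw [sigmaMap_piMap hl.1, replicateDiffs_eq_conj hl.1]
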